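/- arXiv:1901.09768 — 2 statements merged into one kernel-verified Lean document; each statement's English description precedes it below -/
import Mathlib

section
/- Let A and B be nonsingular totally positive n×n matrices such that J B^{-1} J ≥ J A^{-1} J entrywise, where J = diag(1,-1,...,(-1)^{n-1}). Then the minimal eigenvalue of B is less than or equal to the minimal eigenvalue of A. -/
open Matrix BigOperators

/-- A real square matrix is totally positive if all its minors are nonnegative. -/
def TotPos {n : ℕ} (A : Matrix (Fin n) (Fin n) ℝ) : Prop :=
  ∀ (k : ℕ) (r c : Fin k → Fin n), StrictMono r → StrictMono c →
    0 ≤ (A.submatrix r c).det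

/-- Row-stochastic: nonnegative entries, each row sums to 1. -/
def RowStoch {n : ℕ} (A : Matrix (Fin n) (Fin n) ℝ) : Prop :=
  (∀ i j, 0 ≤ A i j) ∧ ∀ i, ∑ j, A i j = 1

/-- J = diag(1, -1, 1, ..., (-1)^(n-1)). -/
def Jmat (n : ℕ) : Matrix (Fin n) (Fin n) ℝ :=
  Matrix.diagonal fun i => (-1 : ℝ) ^ (i : ℕ)

/-- Elementary upper bidiagonal corner-cutting matrix: identity except
entries (i,i) = 1-l and (i,i+1) = l (0-based indexing). -/
def Uel (n i : ℕ) (hi : i + 1 < n) (l : ℝ) : Matrix (Fin n) (Fin n) ℝ :=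
  Matrix.of fun r c =>
    if r = (⟨i, Nat.lt_of_succ_lt hi⟩ : Fin n) ∧ c = (⟨i, Nat.lt_of_succ_lt hi⟩ : Fin n) then 1 - l
    else if r = (⟨i, Nat.lt_of_succ_lt hi⟩ : Fin n) ∧ c = (⟨i + 1, hi⟩ : Fin n) then l
    else if r = c then 1 else 0

/-- Elementary lower bidiagonal corner-cutting matrix: identity except
entries (i+1,i) = l and (i+1,i+1) = 1-l (0-based indexing). -/
def Lel (n i : ℕ) (hi : i + 1 < n) (l : ℝ) : Matrix (Fin n) (Fin n) ℝ :=
  Matrix.of fun r c =>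
    if r = (⟨i + 1, hi⟩ : Fin n) ∧ c = (⟨i, Nat.lt_of_succ_lt hi⟩ : Fin n) then l
    else if r = (⟨i + 1, hi⟩ : Fin n) ∧ c = (⟨i + 1, hi⟩ : Fin n) then 1 - l
    else if r = c then 1 else 0

/-- Minimal (real) eigenvalue of a real square matrix. -/
noncomputable def minEig {n : ℕ} (A : Matrix (Fin n) (Fin n) ℝ) : ℝ :=
  sInf {μ : ℝ | (A - μ • (1 : Matrix (Fin n) (Fin n) ℝ)).det = 0}

/-- Minimal singular value: square root of the minimal eigenvalue of AᵀA. -/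
noncomputable def minSing {n : ℕ} (A : Matrix (Fin n) (Fin n) ℝ) : ℝ :=
  Real.sqrt (minEig (Aᵀ * A))

/-- Maximum absolute row sum norm. -/
noncomputable def normInf {n : ℕ} (A : Matrix (Fin n) (Fin n) ℝ) : ℝ :=
  ⨆ i, ∑ j, |A i j|

/-- Maximum absolute column sum norm. -/
noncomputable def norm1 {n : ℕ} (A : Matrix (Fin n) (Fin n) ℝ) : ℝ :=
  normInf Aᵀ

/-- Condition number in the ∞-norm. -/
noncomputable def condInf {n : ℕ} (A : Matrix (Fin n) (Fin n) ℝ) : ℝ :=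
  normInf A * normInf A⁻¹

/-- Condition number in the 1-norm. -/
noncomputable def cond1 {n : ℕ} (A : Matrix (Fin n) (Fin n) ℝ) : ℝ :=
  norm1 A * norm1 A⁻¹

/-- Spectral radius of a complex square matrix. -/
noncomputable def specRadC {n : ℕ} (A : Matrix (Fin n) (Fin n) ℂ) : ℝ :=
  sSup {x : ℝ | ∃ μ : ℂ, (A - μ • (1 : Matrix (Fin n) (Fin n) ℂ)).det = 0 ∧ x = ‖μ‖}

lemma TotPos.det_nonneg {n : ℕ} {A : Matrix (Fin n) (Fin n) ℝ} (hA : TotPos A) :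
    0 ≤ A.det := by
  have := hA n id id strictMono_id strictMono_id
  simpa using this

lemma TotPos.minor_nonneg {n : ℕ} {A : Matrix (Fin n) (Fin n) ℝ} (hA : TotPos A)
    (S : Finset (Fin n)) :
    0 ≤ (A.submatrix (S.orderEmbOfFin rfl) (S.orderEmbOfFin rfl)).det :=
  hA S.card _ _ (S.orderEmbOfFin rfl).strictMono (S.orderEmbOfFin rfl).strictMono

-- identification of mixed determinant
lemma det_piecewise {n : ℕ} (A : Matrix (Fin n) (Fin n) ℝ) (S : Finset (Fin n)) :
    (Matrix.of (S.piecewise A (1 : Matrix (Fin n) (Fin n) ℝ))).det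
      = (A.submatrix ((↑) : S → Fin n) ((↑) : S → Fin n)).det := by
  set e := Equiv.sumCompl (· ∈ S) with he
  rw [← Matrix.det_submatrix_equiv_self e]
  have hblock : (Matrix.of (S.piecewise A (1 : Matrix (Fin n) (Fin n) ℝ))).submatrix e e
      = Matrix.fromBlocks (A.submatrix ((↑) : S → Fin n) ((↑) : S → Fin n))
          (A.submatrix ((↑) : S → Fin n) ((↑) : {x // ¬ x ∈ S} → Fin n))
          0 (1 : Matrix {x // ¬ x ∈ S} {x // ¬ x ∈ S} ℝ) := by
    ext i j
    cases i with
    | inl i => cases j with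
      | inl j =>
        simp only [Matrix.submatrix_apply, Matrix.of_apply, he,
          Equiv.sumCompl_apply_inl, Matrix.fromBlocks_apply₁₁,
          S.piecewise_eq_of_mem _ _ i.2, Finset.piecewise, i.2, ↓reduceIte]
      | inr j =>
        simp only [Matrix.submatrix_apply, Matrix.of_apply, he,
          Equiv.sumCompl_apply_inl, Equiv.sumCompl_apply_inr,
          Matrix.fromBlocks_apply₁₂, S.piecewise_eq_of_mem _ _ i.2, Finset.piecewise, i.2,
          ↓reduceIte]
    | inr i => cases j with
      | inl j =>
        have hij : (i : Fin n) ≠ (j : Fin n) := by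
          intro h; exact i.2 (h ▸ j.2)
        simp only [Matrix.submatrix_apply, Matrix.of_apply, he,
          Equiv.sumCompl_apply_inl, Equiv.sumCompl_apply_inr,
          Matrix.fromBlocks_apply₂₁, S.piecewise_eq_of_notMem _ _ i.2, Finset.piecewise, i.2, ↓reduceIte,
          Matrix.one_apply_ne hij, Matrix.zero_apply]
      | inr j =>
        simp only [Matrix.submatrix_apply, Matrix.of_apply, he,
          Equiv.sumCompl_apply_inr, Matrix.fromBlocks_apply₂₂,
          S.piecewise_eq_of_notMem _ _ i.2, Finset.piecewise, i.2, ↓reduceIte]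
        by_cases h : i = j
        · subst h; simp [Matrix.one_apply]
        · rw [Matrix.one_apply_ne (fun hh => h (Subtype.ext hh)),
            Matrix.one_apply_ne h]
  refine (congrArg Matrix.det hblock).trans ?_
  rw [Matrix.det_fromBlocks_zero₂₁]
  simp

lemma minor_coe_nonneg {n : ℕ} {A : Matrix (Fin n) (Fin n) ℝ} (hA : TotPos A)
    (S : Finset (Fin n)) :
    0 ≤ (A.submatrix ((↑) : S → Fin n) ((↑) : S → Fin n)).det := by
  have hiso := S.orderIsoOfFin (rfl : S.card = S.card)
  rw [← Matrix.det_submatrix_equiv_self (S.orderIsoOfFin rfl).toEquiv]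
  have : (A.submatrix ((↑) : S → Fin n) ((↑) : S → Fin n)).submatrix
      (S.orderIsoOfFin rfl).toEquiv (S.orderIsoOfFin rfl).toEquiv
      = A.submatrix (S.orderEmbOfFin rfl) (S.orderEmbOfFin rfl) := by
    ext i j; rfl
  rw [this]
  exact hA.minor_nonneg S

lemma det_add_smul_one_expand {n : ℕ} (A : Matrix (Fin n) (Fin n) ℝ) (t : ℝ) :
    (A + t • (1 : Matrix (Fin n) (Fin n) ℝ)).det
      = ∑ S : Finset (Fin n),
          t ^ (n - S.card) * (A.submatrix ((↑) : S → Fin n) ((↑) : S → Fin n)).det := by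
  have h := (Matrix.detRowAlternating :
      AlternatingMap ℝ (Fin n → ℝ) ℝ (Fin n)).toMultilinearMap.map_add_univ
      (fun i => A i) (fun i => (t • (1 : Matrix (Fin n) (Fin n) ℝ)) i)
  have hdet : (A + t • (1 : Matrix (Fin n) (Fin n) ℝ)).det
      = ∑ S : Finset (Fin n),
          Matrix.det (Matrix.of (S.piecewise A (t • (1 : Matrix (Fin n) (Fin n) ℝ)))) := h
  rw [hdet]
  refine Finset.sum_congr rfl fun S _ => ?_
  have hfac : Matrix.of (S.piecewise A (t • (1 : Matrix (Fin n) (Fin n) ℝ)))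
      = Matrix.of (fun i j => (if i ∈ S then (1:ℝ) else t) *
          (Matrix.of (S.piecewise A (1 : Matrix (Fin n) (Fin n) ℝ))) i j) := by
    ext i j
    by_cases hi : i ∈ S
    · simp [Finset.piecewise, hi]
    · simp [Finset.piecewise, hi]
  rw [hfac, Matrix.det_mul_column, det_piecewise]
  congr 1
  rw [← Finset.prod_sdiff (Finset.subset_univ S)]
  have h1 : ∏ i ∈ S, (if i ∈ S then (1:ℝ) else t) = 1 :=
    Finset.prod_eq_one fun i hi => by simp [hi]
  have h2 : ∏ i ∈ (Finset.univ \ S), (if i ∈ S then (1:ℝ) else t) = t ^ (n - S.card) := by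
    rw [Finset.prod_congr rfl (fun i hi => ?_), Finset.prod_const]
    · congr 1
      rw [Finset.card_univ_diff, Fintype.card_fin]
    · rcases Finset.mem_sdiff.mp hi with ⟨-, hni⟩
      simp [hni]
  rw [h1, h2, mul_one]

lemma det_add_smul_one_pos {n : ℕ} {A : Matrix (Fin n) (Fin n) ℝ} (hA : TotPos A)
    (hdet : 0 < A.det) {t : ℝ} (ht : 0 ≤ t) :
    0 < (A + t • (1 : Matrix (Fin n) (Fin n) ℝ)).det := by
  rw [det_add_smul_one_expand]
  refine Finset.sum_pos' (fun S _ => mul_nonneg (pow_nonneg ht _) (minor_coe_nonneg hA S)) ?_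
  refine ⟨Finset.univ, Finset.mem_univ _, ?_⟩
  have hcard : (Finset.univ : Finset (Fin n)).card = n := by simp
  rw [hcard, Nat.sub_self, pow_zero, one_mul]
  have key : ∀ (S : Finset (Fin n)), S = Finset.univ →
      (A.submatrix ((↑) : S → Fin n) ((↑) : S → Fin n)).det = A.det := by
    intro S hS
    have hmem : ∀ x : Fin n, x ∈ S := fun x => hS ▸ Finset.mem_univ x
    have he : A.submatrix ((↑) : S → Fin n) ((↑) : S → Fin n)
        = A.submatrix (Equiv.subtypeUnivEquiv hmem) (Equiv.subtypeUnivEquiv hmem) := by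
      ext i j; rfl
    rw [he, Matrix.det_submatrix_equiv_self]
  rw [key Finset.univ rfl]; exact hdet

lemma real_eig_pos {n : ℕ} {A : Matrix (Fin n) (Fin n) ℝ} (hA : TotPos A)
    (hdet : 0 < A.det) {μ : ℝ} (h : (A - μ • (1 : Matrix (Fin n) (Fin n) ℝ)).det = 0) :
    0 < μ := by
  by_contra hle
  push_neg at hle
  have : A - μ • (1 : Matrix (Fin n) (Fin n) ℝ)
      = A + (-μ) • (1 : Matrix (Fin n) (Fin n) ℝ) := by
    rw [sub_eq_add_neg, neg_smul]
  rw [this] at h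
  exact absurd h (ne_of_gt (det_add_smul_one_pos hA hdet (neg_nonneg.mpr hle)))

lemma Jconj_apply {n : ℕ} (M : Matrix (Fin n) (Fin n) ℝ) (j k : Fin n) :
    (Jmat n * M * Jmat n) j k = (-1 : ℝ) ^ ((j : ℕ) + (k : ℕ)) * M j k := by
  rw [Jmat, Matrix.mul_diagonal, Matrix.diagonal_mul, pow_add]
  ring

lemma Jconj_nonneg {m : ℕ} {A : Matrix (Fin (m + 1)) (Fin (m + 1)) ℝ}
    (hA : TotPos A) (hdet : 0 < A.det) (j k : Fin (m + 1)) :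
    0 ≤ (Jmat (m + 1) * A⁻¹ * Jmat (m + 1)) j k := by
  rw [Jconj_apply]
  rw [Matrix.inv_def, Matrix.smul_apply,
    Matrix.adjugate_fin_succ_eq_det_submatrix]
  rw [Ring.inverse_eq_inv']
  have hsign : (-1 : ℝ) ^ ((j : ℕ) + (k : ℕ)) * (A.det⁻¹ •
      ((-1 : ℝ) ^ ((k : ℕ) + (j : ℕ)) * (A.submatrix k.succAbove j.succAbove).det))
      = A.det⁻¹ * (A.submatrix k.succAbove j.succAbove).det := by
    rw [smul_eq_mul]
    rw [show ((k : ℕ) + (j : ℕ)) = ((j : ℕ) + (k : ℕ)) from Nat.add_comm _ _]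
    rw [show (-1 : ℝ) ^ ((j:ℕ)+(k:ℕ)) * (A.det⁻¹ * ((-1 : ℝ) ^ ((j:ℕ)+(k:ℕ)) *
        (A.submatrix k.succAbove j.succAbove).det))
      = ((-1 : ℝ) ^ ((j:ℕ)+(k:ℕ)) * (-1 : ℝ) ^ ((j:ℕ)+(k:ℕ))) * (A.det⁻¹ *
        (A.submatrix k.succAbove j.succAbove).det) from by ring]
    rw [← pow_add, ← two_mul, pow_mul]
    norm_num
  rw [hsign]
  exact mul_nonneg (inv_nonneg.mpr hdet.le)
    (hA m _ _ (Fin.strictMono_succAbove k) (Fin.strictMono_succAbove j))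

section Analysis

attribute [local instance] Matrix.linftyOpNormedRing Matrix.linftyOpNormedAlgebra
  Matrix.linfty_opNormOneClass

open Complex Filter Topology ENNReal

variable {m : ℕ}

/-- complexification of a real matrix -/
def cmat {m : ℕ} (M : Matrix (Fin m) (Fin m) ℝ) : Matrix (Fin m) (Fin m) ℂ :=
  M.map (Complex.ofReal ·)

lemma cmat_pow (M : Matrix (Fin m) (Fin m) ℝ) (k : ℕ) :
    cmat (M ^ k) = (cmat M) ^ k := by
  have : ∀ N : Matrix (Fin m) (Fin m) ℝ, cmat N = Complex.ofRealHom.mapMatrix N := fun N => rfl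
  rw [this, this, map_pow]

lemma cmat_nnnorm (M : Matrix (Fin m) (Fin m) ℝ) : ‖cmat M‖₊ = ‖M‖₊ := by
  rw [Matrix.linfty_opNNNorm_def, Matrix.linfty_opNNNorm_def]
  congr 1; ext i; congr 1; ext j
  simp [cmat]

lemma cmat_det (M : Matrix (Fin m) (Fin m) ℝ) :
    (cmat M).det = Complex.ofReal M.det := by
  exact (Complex.ofRealHom.map_det M).symm

lemma mem_spectrum_iff_det {m : ℕ} (M : Matrix (Fin m) (Fin m) ℂ) (z : ℂ) :
    z ∈ spectrum ℂ M ↔ (M - z • (1 : Matrix (Fin m) (Fin m) ℂ)).det = 0 := by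
  rw [spectrum.mem_iff, Algebra.algebraMap_eq_smul_one, Matrix.isUnit_iff_isUnit_det,
    isUnit_iff_ne_zero, not_ne_iff]
  constructor
  · intro h
    have : M - z • 1 = -(z • (1 : Matrix (Fin m) (Fin m) ℂ) - M) := by rw [neg_sub]
    rw [this, Matrix.det_neg, h, mul_zero]
  · intro h
    have : z • (1 : Matrix (Fin m) (Fin m) ℂ) - M = -(M - z • 1) := by rw [neg_sub]
    rw [this, Matrix.det_neg, h, mul_zero]

end Analysis

section Analysis2

attribute [local instance] Matrix.linftyOpNormedRing Matrix.linftyOpNormedAlgebra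
  Matrix.linfty_opNormOneClass

open Complex Filter Topology ENNReal

lemma geom_tsum_inv {R : Type*} [NormedRing R] [CompleteSpace R] {x : R}
    (hx : Summable (fun k : ℕ => x ^ k)) :
    (1 - x) * (∑' k : ℕ, x ^ k) = 1 ∧ (∑' k : ℕ, x ^ k) * (1 - x) = 1 := by
  have hS := hx.hasSum.tendsto_sum_nat
  have h0 : Tendsto (fun k : ℕ => x ^ k) atTop (𝓝 0) := hx.tendsto_atTop_zero
  have hq : Tendsto (fun K : ℕ => x ^ K - 1) atTop (𝓝 (0 - 1)) := h0.sub_const 1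
  constructor
  · have h1 : Tendsto (fun K => (x - 1) * ∑ i ∈ Finset.range K, x ^ i) atTop
        (𝓝 ((x - 1) * ∑' k : ℕ, x ^ k)) := hS.const_mul _
    have h2 : (fun K => (x - 1) * ∑ i ∈ Finset.range K, x ^ i)
        = fun K : ℕ => x ^ K - 1 := funext fun K => mul_geom_sum x K
    rw [h2] at h1
    have h3 := tendsto_nhds_unique h1 hq
    have : (1 - x) * (∑' k : ℕ, x ^ k) = -((x - 1) * ∑' k : ℕ, x ^ k) := by
      rw [← neg_mul, neg_sub]
    rw [this, h3]; norm_num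
  · have h1 : Tendsto (fun K => (∑ i ∈ Finset.range K, x ^ i) * (x - 1)) atTop
        (𝓝 ((∑' k : ℕ, x ^ k) * (x - 1))) := hS.mul_const _
    have h2 : (fun K => (∑ i ∈ Finset.range K, x ^ i) * (x - 1))
        = fun K : ℕ => x ^ K - 1 := funext fun K => geom_sum_mul x K
    rw [h2] at h1
    have h3 := tendsto_nhds_unique h1 hq
    have : (∑' k : ℕ, x ^ k) * (1 - x) = -((∑' k : ℕ, x ^ k) * (x - 1)) := by
      rw [← mul_neg, neg_sub]
    rw [this, h3]; norm_num

variable {m : ℕ}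

lemma entry_nnnorm_le {p : ℕ} {α : Type*} [NormedRing α] (M : Matrix (Fin p) (Fin p) α)
    (i j : Fin p) : ‖M i j‖₊ ≤ ‖M‖₊ := by
  rw [Matrix.linfty_opNNNorm_def]
  refine le_trans ?_ (Finset.le_sup (f := fun i => ∑ j, ‖M i j‖₊) (Finset.mem_univ i))
  exact Finset.single_le_sum (f := fun j => ‖M i j‖₊) (fun _ _ => zero_le) (Finset.mem_univ j)

lemma nnnorm_mono_of_entry {p : ℕ} {α : Type*} [NormedRing α]
    (X Y : Matrix (Fin p) (Fin p) α) (h : ∀ i j, ‖X i j‖₊ ≤ ‖Y i j‖₊) : ‖X‖₊ ≤ ‖Y‖₊ := by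
  rw [Matrix.linfty_opNNNorm_def, Matrix.linfty_opNNNorm_def]
  exact Finset.sup_mono_fun (fun i _ => Finset.sum_le_sum (fun j _ => h i j))

end Analysis2


section Analysis3

attribute [local instance] Matrix.linftyOpNormedRing Matrix.linftyOpNormedAlgebra
  Matrix.linfty_opNormOneClass

open Complex Filter Topology ENNReal

lemma resolvent_bits {p : ℕ} (A : Matrix (Fin p) (Fin p) ℂ) {s : ℂ}
    (h : spectralRadius ℂ A < ENNReal.ofReal ‖s‖) :
    Summable (fun k : ℕ => ‖s⁻¹ ^ (k + 1) • A ^ k‖) ∧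
      Summable (fun k : ℕ => s⁻¹ ^ (k + 1) • A ^ k) ∧
      (s • (1 : Matrix (Fin p) (Fin p) ℂ) - A) * (∑' k : ℕ, s⁻¹ ^ (k + 1) • A ^ k) = 1 ∧
      (∑' k : ℕ, s⁻¹ ^ (k + 1) • A ^ k) * (s • (1 : Matrix (Fin p) (Fin p) ℂ) - A) = 1 := by
  have hs0 : 0 < ‖s‖ := by
    by_contra hc
    push_neg at hc
    rw [(by simpa using hc : ENNReal.ofReal ‖s‖ = 0)] at h
    exact absurd h (not_lt_of_ge zero_le)
  have hsne : s ≠ 0 := by simpa using hs0.ne'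
  obtain ⟨u, hu1, hu2⟩ := exists_between h
  have hutop : u ≠ ⊤ := ne_top_of_lt hu2
  set t' : ℝ := u.toReal with ht'
  have ht'0 : 0 ≤ t' := ENNReal.toReal_nonneg
  have ht's : t' < ‖s‖ := by
    have := (ENNReal.toReal_lt_toReal hutop ofReal_ne_top).mpr hu2
    rwa [ENNReal.toReal_ofReal hs0.le] at this
  -- eventual bound on norms of powers
  have hg := spectrum.pow_nnnorm_pow_one_div_tendsto_nhds_spectralRadius A
  have hev : ∀ᶠ k : ℕ in atTop, (‖A ^ k‖₊ : ℝ≥0∞) ^ (1 / (k : ℝ)) < u :=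
    hg.eventually_lt_const hu1
  have hev2 : ∀ᶠ k : ℕ in atTop, ‖A ^ k‖ ≤ t' ^ k := by
    filter_upwards [hev, eventually_ge_atTop 1] with k hk hk1
    have hkne : (k : ℝ) ≠ 0 := Nat.cast_ne_zero.mpr (by omega)
    have h1 : ((‖A ^ k‖₊ : ℝ≥0∞) ^ (1 / (k : ℝ))) ^ (k : ℝ) ≤ u ^ (k : ℝ) :=
      ENNReal.rpow_le_rpow hk.le (by positivity)
    rw [← ENNReal.rpow_mul, one_div_mul_cancel hkne, ENNReal.rpow_one] at h1
    have h2 : (‖A ^ k‖₊ : ℝ≥0∞) ≤ u ^ (k : ℝ) := h1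
    have h3 : (‖A ^ k‖₊ : ℝ≥0∞).toReal ≤ (u ^ (k : ℝ)).toReal :=
      ENNReal.toReal_mono (by simp [ENNReal.rpow_natCast, hutop, ENNReal.pow_ne_top]) h2
    rw [← ENNReal.toReal_rpow, Real.rpow_natCast] at h3
    simpa [ENNReal.coe_toReal, coe_nnnorm] using h3
  have hgeom : Summable (fun k : ℕ => ‖s‖⁻¹ * (t' / ‖s‖) ^ k) := by
    refine Summable.mul_left _ (summable_geometric_of_lt_one (by positivity) ?_)
    rw [div_lt_one hs0]; exact ht's
  have hnormbound : ∀ᶠ k : ℕ in atTop,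
      ‖s⁻¹ ^ (k + 1) • A ^ k‖ ≤ ‖s‖⁻¹ * (t' / ‖s‖) ^ k := by
    filter_upwards [hev2] with k hk
    rw [norm_smul, norm_pow, norm_inv]
    have h1 : ‖s‖⁻¹ ^ (k + 1) * ‖A ^ k‖ ≤ ‖s‖⁻¹ ^ (k + 1) * t' ^ k :=
      mul_le_mul_of_nonneg_left hk (by positivity)
    refine h1.trans (le_of_eq ?_)
    rw [pow_succ, div_pow, div_eq_mul_inv, inv_pow]
    ring
  have hsumnorm : Summable (fun k : ℕ => ‖s⁻¹ ^ (k + 1) • A ^ k‖) := by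
    refine Summable.of_norm_bounded_eventually_nat hgeom ?_
    filter_upwards [hnormbound] with k hk
    calc |‖s⁻¹ ^ (k + 1) • A ^ k‖| = ‖s⁻¹ ^ (k + 1) • A ^ k‖ := _root_.abs_of_nonneg (norm_nonneg _)
      _ ≤ _ := hk
  have hsum : Summable (fun k : ℕ => s⁻¹ ^ (k + 1) • A ^ k) :=
    Summable.of_norm hsumnorm
  -- the geometric identity
  set x : Matrix (Fin p) (Fin p) ℂ := s⁻¹ • A with hx
  have hxk : ∀ k : ℕ, x ^ k = s⁻¹ ^ k • A ^ k := fun k => smul_pow _ _ _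
  have hfx : ∀ k : ℕ, s⁻¹ ^ (k + 1) • A ^ k = s⁻¹ • x ^ k := by
    intro k
    rw [hxk, smul_smul, pow_succ, mul_comm]
  have hsumx : Summable (fun k : ℕ => x ^ k) := by
    have h1 : Summable (fun k : ℕ => s⁻¹ • x ^ k) := by
      simpa only [hfx] using hsum
    have h2 := h1.const_smul s
    simpa [smul_smul, mul_inv_cancel₀ hsne] using h2
  obtain ⟨hg1, hg2⟩ := geom_tsum_inv hsumx
  have hfac : s • (1 : Matrix (Fin p) (Fin p) ℂ) - A = s • ((1 : Matrix (Fin p) (Fin p) ℂ) - x) := by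
    rw [smul_sub, hx, smul_smul, mul_inv_cancel₀ hsne, one_smul]
  have htsum : (∑' k : ℕ, s⁻¹ ^ (k + 1) • A ^ k) = s⁻¹ • ∑' k : ℕ, x ^ k := by
    rw [show (fun k : ℕ => s⁻¹ ^ (k + 1) • A ^ k) = fun k : ℕ => s⁻¹ • x ^ k from funext hfx]
    exact tsum_const_smul'' _
  refine ⟨hsumnorm, hsum, ?_, ?_⟩
  · rw [hfac, htsum, Matrix.smul_mul, Matrix.mul_smul, smul_smul, mul_inv_cancel₀ hsne, one_smul]
    exact hg1
  · rw [hfac, htsum, Matrix.smul_mul, Matrix.mul_smul, smul_smul, inv_mul_cancel₀ hsne, one_smul]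
    exact hg2

lemma pow_entry_nonneg {p : ℕ} {D : Matrix (Fin p) (Fin p) ℝ} (hD : ∀ i j, 0 ≤ D i j) :
    ∀ (k : ℕ) (i j : Fin p), 0 ≤ (D ^ k) i j := by
  intro k
  induction k with
  | zero => intro i j; by_cases h : i = j <;> simp [Matrix.one_apply, h]
  | succ k ih =>
    intro i j
    rw [pow_succ, Matrix.mul_apply]
    exact Finset.sum_nonneg fun l _ => mul_nonneg (ih i l) (hD l j)

noncomputable def entryCLM {p : ℕ} (i j : Fin p) : Matrix (Fin p) (Fin p) ℂ →L[ℂ] ℂ :=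
  LinearMap.toContinuousLinearMap
    { toFun := fun M => M i j, map_add' := fun _ _ => rfl, map_smul' := fun _ _ => rfl }

lemma cmat_pow_entry {p : ℕ} (D : Matrix (Fin p) (Fin p) ℝ) (k : ℕ) (i j : Fin p) :
    ((cmat D) ^ k) i j = Complex.ofReal ((D ^ k) i j) := by
  rw [← cmat_pow]; rfl

lemma resolvent_norm_mono {p : ℕ} (D : Matrix (Fin p) (Fin p) ℝ) (hD : ∀ i j, 0 ≤ D i j)
    {s : ℂ} {t : ℝ} (hts : ‖s‖ = t)
    (hs : spectralRadius ℂ (cmat D) < ENNReal.ofReal t) :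
    ‖∑' k : ℕ, s⁻¹ ^ (k + 1) • (cmat D) ^ k‖₊
      ≤ ‖∑' k : ℕ, ((t : ℂ))⁻¹ ^ (k + 1) • (cmat D) ^ k‖₊ := by
  have ht0 : 0 ≤ t := hts ▸ norm_nonneg s
  have hnt : ‖(t : ℂ)‖ = t := by
    rw [Complex.norm_real, Real.norm_eq_abs, _root_.abs_of_nonneg ht0]
  obtain ⟨hsn_s, hsum_s, -, -⟩ := resolvent_bits (cmat D) (s := s) (by rwa [hts])
  obtain ⟨hsn_t, hsum_t, -, -⟩ := resolvent_bits (cmat D) (s := (t : ℂ)) (by rwa [hnt])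
  refine nnnorm_mono_of_entry _ _ fun i j => ?_
  rw [← NNReal.coe_le_coe, coe_nnnorm, coe_nnnorm]
  -- entry formulas
  have hEs : (∑' k : ℕ, s⁻¹ ^ (k + 1) • (cmat D) ^ k) i j
      = ∑' k : ℕ, s⁻¹ ^ (k + 1) * ((cmat D) ^ k) i j := by
    have := (entryCLM i j).map_tsum hsum_s
    exact this
  have hEt : (∑' k : ℕ, ((t : ℂ))⁻¹ ^ (k + 1) • (cmat D) ^ k) i j
      = ∑' k : ℕ, ((t : ℂ))⁻¹ ^ (k + 1) * ((cmat D) ^ k) i j := by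
    have := (entryCLM i j).map_tsum hsum_t
    exact this
  set g : ℕ → ℝ := fun k => t⁻¹ ^ (k + 1) * ((D ^ k) i j) with hg
  have hterm_t : ∀ k : ℕ, ((t : ℂ))⁻¹ ^ (k + 1) * ((cmat D) ^ k) i j
      = Complex.ofReal (g k) := by
    intro k
    rw [cmat_pow_entry, hg]
    push_cast
    ring
  have hg_nonneg : ∀ k, 0 ≤ g k := fun k =>
    mul_nonneg (by positivity) (pow_entry_nonneg hD k i j)
  have hnorm_term_s : ∀ k : ℕ, ‖s⁻¹ ^ (k + 1) * ((cmat D) ^ k) i j‖ = g k := by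
    intro k
    rw [norm_mul, norm_pow, norm_inv, hts, cmat_pow_entry, Complex.norm_real,
      Real.norm_eq_abs, _root_.abs_of_nonneg (pow_entry_nonneg hD k i j), hg]
  have hgsum : Summable g := by
    refine Summable.of_nonneg_of_le hg_nonneg (fun k => ?_) hsn_s
    rw [← hnorm_term_s k]
    have h1 : ‖(s⁻¹ ^ (k + 1) • (cmat D) ^ k) i j‖₊ ≤ ‖s⁻¹ ^ (k + 1) • (cmat D) ^ k‖₊ :=
      entry_nnnorm_le _ i j
    have h2 : ‖(s⁻¹ ^ (k + 1) • (cmat D) ^ k) i j‖ ≤ ‖s⁻¹ ^ (k + 1) • (cmat D) ^ k‖ := h1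
    simpa [Matrix.smul_apply, smul_eq_mul] using h2
  have hnormsum_s : Summable (fun k => ‖s⁻¹ ^ (k + 1) * ((cmat D) ^ k) i j‖) := by
    simpa only [hnorm_term_s] using hgsum
  have hupper : ‖(∑' k : ℕ, s⁻¹ ^ (k + 1) • (cmat D) ^ k) i j‖ ≤ ∑' k, g k := by
    rw [hEs]
    refine (norm_tsum_le_tsum_norm hnormsum_s).trans (le_of_eq ?_)
    exact tsum_congr hnorm_term_s
  have hlower : (∑' k : ℕ, ((t : ℂ))⁻¹ ^ (k + 1) • (cmat D) ^ k) i j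
      = Complex.ofReal (∑' k, g k) := by
    rw [hEt, show (fun k : ℕ => ((t : ℂ))⁻¹ ^ (k + 1) * ((cmat D) ^ k) i j)
      = fun k => Complex.ofReal (g k) from funext hterm_t]
    exact (Complex.ofRealCLM.map_tsum hgsum).symm
  rw [hlower, Complex.norm_real, Real.norm_eq_abs]
  rw [_root_.abs_of_nonneg (tsum_nonneg hg_nonneg)]
  exact hupper

lemma perron {p : ℕ} (D : Matrix (Fin (p+1)) (Fin (p+1)) ℝ)
    (hD : ∀ i j, 0 ≤ D i j) (hdet : D.det ≠ 0) :
    ∃ ρ : ℝ, 0 < ρ ∧ spectralRadius ℂ (cmat D) = ENNReal.ofReal ρ ∧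
      (D - ρ • (1 : Matrix (Fin (p+1)) (Fin (p+1)) ℝ)).det = 0 := by
  obtain ⟨lam, hmem, hnorm⟩ := spectrum.exists_nnnorm_eq_spectralRadius (a := cmat D)
  set ρ : ℝ := ‖lam‖ with hρ
  have hlamdet : (cmat D - lam • 1).det = 0 := (mem_spectrum_iff_det _ _).mp hmem
  have hρ0 : 0 < ρ := by
    rcases eq_or_ne lam 0 with h0 | h0
    · exfalso
      rw [h0, zero_smul, sub_zero, cmat_det] at hlamdet
      exact hdet (by exact_mod_cast hlamdet)
    · exact norm_pos_iff.mpr h0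
  have hsr : spectralRadius ℂ (cmat D) = ENNReal.ofReal ρ := by
    rw [← hnorm, hρ, ofReal_norm, enorm_eq_nnnorm]
  refine ⟨ρ, hρ0, hsr, ?_⟩
  by_contra hne
  have hmapsub : ∀ r : ℝ, cmat (D - r • 1) = cmat D - (r : ℂ) • 1 := by
    intro r
    ext i j
    by_cases h : i = j <;>
      simp [cmat, Matrix.one_apply, h, Matrix.sub_apply, Matrix.smul_apply]
  set M : ℝ → Matrix (Fin (p+1)) (Fin (p+1)) ℂ := fun t => (t : ℂ) • 1 - cmat D with hM
  have hMdet_ne : (M ρ).det ≠ 0 := by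
    have h1 : M ρ = -(cmat D - (ρ : ℂ) • 1) := by rw [hM, neg_sub]
    rw [h1, Matrix.det_neg, ← hmapsub, cmat_det]
    intro hcon
    rcases mul_eq_zero.mp hcon with hc | hc
    · exact absurd hc (pow_ne_zero _ (by norm_num))
    · exact hne (by exact_mod_cast hc)
  set F : ℝ → Matrix (Fin (p+1)) (Fin (p+1)) ℂ :=
    fun t => ((M t).det)⁻¹ • (M t).adjugate with hF
  have hMcont : Continuous M := by
    apply Continuous.sub _ continuous_const
    exact (Complex.continuous_ofReal).smul continuous_const
  have hFcontat : ContinuousAt F ρ := by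
    show ContinuousAt (fun t => ((M t).det)⁻¹ • (M t).adjugate) ρ
    exact (ContinuousAt.inv₀ hMcont.matrix_det.continuousAt hMdet_ne).smul
      hMcont.matrix_adjugate.continuousAt
  have hFtend : Tendsto (fun t => ‖F t‖) (𝓝[>] ρ) (𝓝 ‖F ρ‖) :=
    (hFcontat.tendsto.norm).mono_left nhdsWithin_le_nhds
  have hblow : ∀ t : ℝ, ρ < t → (t - ρ)⁻¹ ≤ ‖F t‖ := by
    intro t ht
    have ht0 : 0 < t := hρ0.trans ht
    have hnt : ‖(t : ℂ)‖ = t := by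
      rw [Complex.norm_real, Real.norm_eq_abs, _root_.abs_of_nonneg ht0.le]
    have hsrt : spectralRadius ℂ (cmat D) < ENNReal.ofReal t := by
      rw [hsr]; exact (ENNReal.ofReal_lt_ofReal_iff ht0).mpr ht
    set s : ℂ := ((t / ρ : ℝ) : ℂ) * lam with hs
    have hnorms : ‖s‖ = t := by
      rw [hs, norm_mul, Complex.norm_real, Real.norm_eq_abs,
        _root_.abs_of_nonneg (by positivity), ← hρ]
      field_simp
    obtain ⟨-, hsum_s, hls, hrs⟩ := resolvent_bits (cmat D) (s := s) (by rwa [hnorms])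
    obtain ⟨-, hsum_t, hlt, hrt⟩ := resolvent_bits (cmat D) (s := (t : ℂ)) (by rwa [hnt])
    set Rs : Matrix (Fin (p+1)) (Fin (p+1)) ℂ := ∑' k : ℕ, s⁻¹ ^ (k+1) • (cmat D) ^ k with hRs
    set Rt : Matrix (Fin (p+1)) (Fin (p+1)) ℂ :=
      ∑' k : ℕ, ((t : ℂ))⁻¹ ^ (k+1) • (cmat D) ^ k with hRt
    have hFt : F t = Rt := by
      have hinv : (M t)⁻¹ = Rt := Matrix.inv_eq_right_inv hlt
      rw [hF]
      calc ((M t).det)⁻¹ • (M t).adjugate = (M t)⁻¹ := by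
            rw [Matrix.inv_def, Ring.inverse_eq_inv]
        _ = Rt := hinv
    have hslam : s - lam = (((t - ρ)/ρ : ℝ) : ℂ) * lam := by
      have hρc : (ρ : ℂ) ≠ 0 := by exact_mod_cast hρ0.ne'
      rw [hs]; push_cast
      field_simp
    have hdiffpos : 0 < t - ρ := sub_pos.mpr ht
    have hnormdiff : ‖s - lam‖ = t - ρ := by
      rw [hslam, norm_mul, Complex.norm_real, Real.norm_eq_abs,
        _root_.abs_of_nonneg (by positivity), ← hρ]
      field_simp
    have hνne : s - lam ≠ 0 := by
      intro h; rw [h, norm_zero] at hnormdiff; linarith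
    set ν : ℂ := (s - lam)⁻¹ with hν
    have hν1 : ν * (s - lam) = 1 := inv_mul_cancel₀ hνne
    have hνmem : ν ∈ spectrum ℂ Rs := by
      rw [mem_spectrum_iff_det]
      have h1 : Rs - ν • 1 = Rs * (1 - ν • (s • 1 - cmat D)) := by
        rw [Matrix.mul_sub, mul_one, Matrix.mul_smul, hrs]
      have h2 : (1 : Matrix (Fin (p+1)) (Fin (p+1)) ℂ) - ν • (s • 1 - cmat D)
          = ν • (cmat D - lam • 1) := by
        ext i j
        by_cases h : i = j
        · subst h
          simp only [Matrix.sub_apply, Matrix.smul_apply, Matrix.one_apply_eq,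
            smul_eq_mul]
          linear_combination -hν1
        · simp only [Matrix.sub_apply, Matrix.smul_apply, Matrix.one_apply_ne h,
            smul_eq_mul]
          ring
      have h3 : (Rs - ν • (1 : Matrix (Fin (p+1)) (Fin (p+1)) ℂ)).det
          = Rs.det * (ν ^ (p+1) * (cmat D - lam • 1).det) := by
        rw [h1, Matrix.det_mul, h2, Matrix.det_smul, Fintype.card_fin]
      rw [h3, hlamdet]; ring
    have hbound : ‖ν‖ ≤ ‖Rs‖ := spectrum.norm_le_norm_of_mem hνmem
    have hνnorm : ‖ν‖ = (t - ρ)⁻¹ := by rw [hν, norm_inv, hnormdiff]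
    have hcomp : ‖Rs‖ ≤ ‖Rt‖ := by
      have h6 : ‖Rs‖₊ ≤ ‖Rt‖₊ := resolvent_norm_mono D hD hnorms hsrt
      exact_mod_cast h6
    rw [hFt]
    calc (t - ρ)⁻¹ = ‖ν‖ := hνnorm.symm
      _ ≤ ‖Rs‖ := hbound
      _ ≤ ‖Rt‖ := hcomp
  have h1 : ∀ᶠ t in 𝓝[>] ρ, ‖F t‖ < ‖F ρ‖ + 1 :=
    hFtend.eventually_lt_const (lt_add_one _)
  have h2 : Tendsto (fun t : ℝ => (t - ρ)⁻¹) (𝓝[>] ρ) atTop := by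
    have hsub : Tendsto (fun t : ℝ => t - ρ) (𝓝[>] ρ) (𝓝[>] 0) := by
      apply tendsto_nhdsWithin_of_tendsto_nhds_of_eventually_within
      · have : Tendsto (fun t : ℝ => t - ρ) (𝓝 ρ) (𝓝 (ρ - ρ)) :=
          (continuous_id.sub continuous_const).continuousAt
        simpa using this.mono_left nhdsWithin_le_nhds
      · filter_upwards [self_mem_nhdsWithin] with t ht
        exact sub_pos.mpr (show ρ < t from ht)
    exact tendsto_inv_nhdsGT_zero.comp hsub
  have h3 : ∀ᶠ t in 𝓝[>] ρ, ‖F ρ‖ + 1 < (t - ρ)⁻¹ := h2.eventually_gt_atTop _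
  have h4 : ∀ᶠ t in 𝓝[>] ρ, ρ < t := self_mem_nhdsWithin
  obtain ⟨t, hta, htb, htc⟩ := (h1.and (h3.and h4)).exists
  have h5 := hblow t htc
  linarith

lemma entrywise_pow_le {p : ℕ} {C D : Matrix (Fin p) (Fin p) ℝ}
    (hC : ∀ i j, 0 ≤ C i j) (hCD : ∀ i j, C i j ≤ D i j) :
    ∀ (k : ℕ) (i j : Fin p), (C ^ k) i j ≤ (D ^ k) i j := by
  intro k
  induction k with
  | zero => intro i j; simp
  | succ k ih =>
    intro i j
    rw [pow_succ, pow_succ, Matrix.mul_apply, Matrix.mul_apply]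
    refine Finset.sum_le_sum fun l _ => ?_
    exact mul_le_mul (ih i l) (hCD l j) (hC l j) (le_trans (pow_entry_nonneg hC k i l) (ih i l))

lemma specRad_mono {p : ℕ} (C D : Matrix (Fin p) (Fin p) ℝ)
    (hC : ∀ i j, 0 ≤ C i j) (hCD : ∀ i j, C i j ≤ D i j) :
    spectralRadius ℂ (cmat C) ≤ spectralRadius ℂ (cmat D) := by
  have hgC := spectrum.pow_nnnorm_pow_one_div_tendsto_nhds_spectralRadius (cmat C)
  have hgD := spectrum.pow_nnnorm_pow_one_div_tendsto_nhds_spectralRadius (cmat D)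
  refine le_of_tendsto_of_tendsto' hgC hgD fun k => ?_
  refine ENNReal.rpow_le_rpow ?_ (by positivity)
  rw [← cmat_pow, ← cmat_pow, cmat_nnnorm, cmat_nnnorm]
  norm_cast
  refine nnnorm_mono_of_entry _ _ fun i j => ?_
  have h1 : 0 ≤ (C ^ k) i j := pow_entry_nonneg hC k i j
  have h2 : (C ^ k) i j ≤ (D ^ k) i j := entrywise_pow_le hC hCD k i j
  rw [← NNReal.coe_le_coe, coe_nnnorm, coe_nnnorm, Real.norm_eq_abs, Real.norm_eq_abs,
    _root_.abs_of_nonneg h1, _root_.abs_of_nonneg (h1.trans h2)]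
  exact h2

lemma mem_spectrum_of_real_det {p : ℕ} (M : Matrix (Fin p) (Fin p) ℝ) {r : ℝ}
    (h : (M - r • (1 : Matrix (Fin p) (Fin p) ℝ)).det = 0) :
    (r : ℂ) ∈ spectrum ℂ (cmat M) := by
  rw [mem_spectrum_iff_det]
  have hmapsub : cmat (M - r • 1) = cmat M - (r : ℂ) • 1 := by
    ext i j
    by_cases hij : i = j <;>
      simp [cmat, Matrix.one_apply, hij, Matrix.sub_apply, Matrix.smul_apply]
  rw [← hmapsub, cmat_det, h, Complex.ofReal_zero]

lemma nnnorm_le_specRad {p : ℕ} (M : Matrix (Fin p) (Fin p) ℂ) {z : ℂ}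
    (h : z ∈ spectrum ℂ M) : (‖z‖₊ : ENNReal) ≤ spectralRadius ℂ M :=
  le_iSup₂ (f := fun k (_ : k ∈ spectrum ℂ M) => (‖k‖₊ : ENNReal)) z h

lemma JJ_eq_one (n : ℕ) : Jmat n * Jmat n = 1 := by
  rw [Jmat, Matrix.diagonal_mul_diagonal]
  have : (fun i : Fin n => (-1 : ℝ) ^ (i : ℕ) * (-1 : ℝ) ^ (i : ℕ)) = fun _ => 1 := by
    funext i
    rw [← pow_add]
    exact Even.neg_one_pow ⟨(i : ℕ), rfl⟩
  rw [this, Matrix.diagonal_one]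

lemma det_Jconj {p : ℕ} (X : Matrix (Fin p) (Fin p) ℝ) :
    (Jmat p * X * Jmat p).det = X.det := by
  rw [Matrix.det_mul, Matrix.det_mul]
  have h1 : (Jmat p).det * (Jmat p).det = 1 := by
    rw [← Matrix.det_mul, JJ_eq_one, Matrix.det_one]
  calc (Jmat p).det * X.det * (Jmat p).det
      = (Jmat p).det * (Jmat p).det * X.det := by ring
    _ = X.det := by rw [h1, one_mul]

lemma eig_transfer {p : ℕ} {A : Matrix (Fin (p+1)) (Fin (p+1)) ℝ} (hU : IsUnit A.det)
    {ν : ℝ} (hν : ν ≠ 0) :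
    ((Jmat (p+1) * A⁻¹ * Jmat (p+1)) - ν • (1 : Matrix (Fin (p+1)) (Fin (p+1)) ℝ)).det = 0
      ↔ (A - ν⁻¹ • (1 : Matrix (Fin (p+1)) (Fin (p+1)) ℝ)).det = 0 := by
  have h1 : (Jmat (p+1) * A⁻¹ * Jmat (p+1)) - ν • (1 : Matrix (Fin (p+1)) (Fin (p+1)) ℝ)
      = Jmat (p+1) * (A⁻¹ - ν • 1) * Jmat (p+1) := by
    rw [Matrix.mul_sub, Matrix.sub_mul, Matrix.mul_smul, Matrix.smul_mul, mul_one, JJ_eq_one]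
  have h3 : A⁻¹ - ν • (1 : Matrix (Fin (p+1)) (Fin (p+1)) ℝ)
      = (-ν) • (A⁻¹ * (A - ν⁻¹ • 1)) := by
    rw [Matrix.mul_sub, Matrix.nonsing_inv_mul _ hU, Matrix.mul_smul, mul_one, smul_sub,
      smul_smul]
    rw [neg_mul, mul_inv_cancel₀ hν, neg_smul, neg_smul, one_smul, sub_neg_eq_add]
    abel
  have h4 : ((Jmat (p+1) * A⁻¹ * Jmat (p+1)) - ν • (1 : Matrix (Fin (p+1)) (Fin (p+1)) ℝ)).det
      = (-ν) ^ (p+1) * (A⁻¹.det * (A - ν⁻¹ • 1).det) := by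
    rw [h1, det_Jconj, h3, Matrix.det_smul, Fintype.card_fin, Matrix.det_mul]
  rw [h4]
  have h5 : (-ν) ^ (p+1) ≠ 0 := pow_ne_zero _ (neg_ne_zero.mpr hν)
  have h6 : A⁻¹.det ≠ 0 := by
    have := Matrix.isUnit_nonsing_inv_det A hU
    exact this.ne_zero
  constructor
  · intro h
    rcases mul_eq_zero.mp h with h | h
    · exact absurd h h5
    · rcases mul_eq_zero.mp h with h | h
      · exact absurd h h6
      · exact h
  · intro h
    rw [h, mul_zero, mul_zero]

lemma eig_inv_le {p : ℕ} {A : Matrix (Fin (p+1)) (Fin (p+1)) ℝ} (hA : TotPos A)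
    (hAns : IsUnit A.det) (hdetA : 0 < A.det) {ρ : ℝ} (hρ0 : 0 < ρ)
    (hsr : spectralRadius ℂ (cmat (Jmat (p+1) * A⁻¹ * Jmat (p+1))) = ENNReal.ofReal ρ)
    {μ : ℝ} (hμ : (A - μ • (1 : Matrix (Fin (p+1)) (Fin (p+1)) ℝ)).det = 0) :
    ρ⁻¹ ≤ μ := by
  have hμpos : 0 < μ := real_eig_pos hA hdetA hμ
  have hμinv : ((Jmat (p+1) * A⁻¹ * Jmat (p+1)) - μ⁻¹ • (1 : Matrix (Fin (p+1)) (Fin (p+1)) ℝ)).det = 0 := by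
    rw [eig_transfer hAns (inv_ne_zero hμpos.ne'), inv_inv]
    exact hμ
  have hmem := mem_spectrum_of_real_det _ hμinv
  have hle := nnnorm_le_specRad _ hmem
  rw [hsr, ← enorm_eq_nnnorm, ← ofReal_norm] at hle
  have h1 : ‖((μ⁻¹ : ℝ) : ℂ)‖ ≤ ρ := by
    rw [← ENNReal.ofReal_le_ofReal_iff hρ0.le]
    exact hle
  rw [Complex.norm_real, Real.norm_eq_abs, _root_.abs_of_nonneg (by positivity)] at h1
  -- from μ⁻¹ ≤ ρ and positivity conclude ρ⁻¹ ≤ μ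
  have h2 : 1 ≤ μ * ρ := by
    calc 1 = μ * μ⁻¹ := (mul_inv_cancel₀ hμpos.ne').symm
      _ ≤ μ * ρ := mul_le_mul_of_nonneg_left h1 hμpos.le
  calc ρ⁻¹ = 1 * ρ⁻¹ := (one_mul _).symm
    _ ≤ (μ * ρ) * ρ⁻¹ := mul_le_mul_of_nonneg_right h2 (by positivity)
    _ = μ := by rw [mul_assoc, mul_inv_cancel₀ hρ0.ne', mul_one]

lemma main_succ {p : ℕ} (A B : Matrix (Fin (p+1)) (Fin (p+1)) ℝ)
    (hA : TotPos A) (hAns : IsUnit A.det) (hB : TotPos B) (hBns : IsUnit B.det)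
    (hdom : ∀ j k, (Jmat (p+1) * A⁻¹ * Jmat (p+1)) j k ≤ (Jmat (p+1) * B⁻¹ * Jmat (p+1)) j k) :
    sInf {μ : ℝ | (B - μ • (1 : Matrix (Fin (p+1)) (Fin (p+1)) ℝ)).det = 0}
      ≤ sInf {μ : ℝ | (A - μ • (1 : Matrix (Fin (p+1)) (Fin (p+1)) ℝ)).det = 0} := by
  have hdetA : 0 < A.det := lt_of_le_of_ne hA.det_nonneg (Ne.symm hAns.ne_zero)
  have hdetB : 0 < B.det := lt_of_le_of_ne hB.det_nonneg (Ne.symm hBns.ne_zero)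
  set C := Jmat (p+1) * A⁻¹ * Jmat (p+1) with hCdef
  set D := Jmat (p+1) * B⁻¹ * Jmat (p+1) with hDdef
  have hC0 : ∀ i j, 0 ≤ C i j := Jconj_nonneg hA hdetA
  have hD0 : ∀ i j, 0 ≤ D i j := Jconj_nonneg hB hdetB
  have hCdet : C.det ≠ 0 := by
    rw [hCdef, det_Jconj]
    exact (Matrix.isUnit_nonsing_inv_det A hAns).ne_zero
  have hDdet : D.det ≠ 0 := by
    rw [hDdef, det_Jconj]
    exact (Matrix.isUnit_nonsing_inv_det B hBns).ne_zero
  obtain ⟨ρA, hρA0, hsrA, hdetCA⟩ := perron C hC0 hCdet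
  obtain ⟨ρB, hρB0, hsrB, hdetDB⟩ := perron D hD0 hDdet
  have hmemA : ρA⁻¹ ∈ {μ : ℝ | (A - μ • (1 : Matrix (Fin (p+1)) (Fin (p+1)) ℝ)).det = 0} := by
    rw [Set.mem_setOf_eq, ← eig_transfer hAns hρA0.ne']
    exact hdetCA
  have hmemB : ρB⁻¹ ∈ {μ : ℝ | (B - μ • (1 : Matrix (Fin (p+1)) (Fin (p+1)) ℝ)).det = 0} := by
    rw [Set.mem_setOf_eq, ← eig_transfer hBns hρB0.ne']
    exact hdetDB
  have hboundA : ∀ μ ∈ {μ : ℝ | (A - μ • (1 : Matrix (Fin (p+1)) (Fin (p+1)) ℝ)).det = 0},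
      ρA⁻¹ ≤ μ := fun μ hμ => eig_inv_le hA hAns hdetA hρA0 hsrA hμ
  have hboundB : ∀ μ ∈ {μ : ℝ | (B - μ • (1 : Matrix (Fin (p+1)) (Fin (p+1)) ℝ)).det = 0},
      ρB⁻¹ ≤ μ := fun μ hμ => eig_inv_le hB hBns hdetB hρB0 hsrB hμ
  have h1 : sInf {μ : ℝ | (B - μ • (1 : Matrix (Fin (p+1)) (Fin (p+1)) ℝ)).det = 0} ≤ ρB⁻¹ :=
    csInf_le ⟨ρB⁻¹, hboundB⟩ hmemB
  have h3 : ρA⁻¹ ≤ sInf {μ : ℝ | (A - μ • (1 : Matrix (Fin (p+1)) (Fin (p+1)) ℝ)).det = 0} :=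
    le_csInf ⟨ρA⁻¹, hmemA⟩ hboundA
  have hρAB : ρA ≤ ρB := by
    have hmono := specRad_mono C D hC0 hdom
    rw [hsrA, hsrB] at hmono
    exact (ENNReal.ofReal_le_ofReal_iff hρB0.le).mp hmono
  have h2 : ρB⁻¹ ≤ ρA⁻¹ := inv_anti₀ hρA0 hρAB
  linarith

end Analysis3


theorem stmt15 (n : ℕ) (A B : Matrix (Fin n) (Fin n) ℝ)
    (hA : TotPos A) (hAns : IsUnit A.det)
    (hB : TotPos B) (hBns : IsUnit B.det)
    (hdom : ∀ j k, (Jmat n * A⁻¹ * Jmat n) j k ≤ (Jmat n * B⁻¹ * Jmat n) j k) :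
    minEig B ≤ minEig A := by
  cases n with
  | zero =>
    have hempty : ∀ M : Matrix (Fin 0) (Fin 0) ℝ,
        {μ : ℝ | (M - μ • (1 : Matrix (Fin 0) (Fin 0) ℝ)).det = 0} = ∅ := by
      intro M
      ext μ
      simp [Matrix.det_fin_zero]
    rw [minEig, minEig, hempty, hempty]
  | succ p => exact main_succ A B hA hAns hB hBns hdom
end

section
/- Every n×n matrix of the form F_{n-1} F_{n-2} ··· F_1 G_1 ··· G_{n-2} G_{n-1}, where each F_i is a product of lower elementary corner-cutting matrices L_{i+1}(α_{i+1,1})···L_n(α_{n,n-i}) and each G_i is a product of upper elementary corner-cutting matrices U_n(α_{n-i,n})···U_{i+1}(α_{1,i+1}) with all parameters α in [0,1), is a nonsingular row-stochastic totally positive matrix. -/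
open Matrix BigOperators

section Aux

variable {n : ℕ}

lemma totPos_one : TotPos (1 : Matrix (Fin n) (Fin n) ℝ) := by
  intro k r c hr hc
  rw [Matrix.det_apply]
  rw [Finset.sum_eq_single (1 : Equiv.Perm (Fin k))]
  · simp only [Equiv.Perm.sign_one, one_smul, Equiv.Perm.one_apply,
      Matrix.submatrix_apply, Matrix.one_apply]
    positivity
  · intro σ _ hσ
    rcases Classical.em (∀ x, r (σ x) = c x) with h | h
    · exfalso
      apply hσ
      have hσm : StrictMono ⇑σ := by
        intro x y hxy
        have := hc hxy
        rw [← h x, ← h y] at this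
        exact hr.lt_iff_lt.mp this
      haveI : WellFoundedLT (Fin k) := Finite.to_wellFoundedLT
      have : ⇑σ = id := (hσm.range_inj strictMono_id).mp
        (by rw [Set.range_id, σ.surjective.range_eq])
      ext x
      simp [this]
    · push_neg at h
      obtain ⟨x, hx⟩ := h
      have : ∏ i, (1 : Matrix (Fin n) (Fin n) ℝ).submatrix r c (σ i) i = 0 := by
        apply Finset.prod_eq_zero (Finset.mem_univ x)
        simp [Matrix.one_apply, hx]
      rw [this, smul_zero]
  · intro h; exact absurd (Finset.mem_univ _) h

lemma rowStoch_one : RowStoch (1 : Matrix (Fin n) (Fin n) ℝ) := by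
  constructor
  · intro i j
    rw [Matrix.one_apply]
    split <;> norm_num
  · intro i
    simp [Matrix.one_apply]

lemma rowStoch_mul {A B : Matrix (Fin n) (Fin n) ℝ} (hA : RowStoch A) (hB : RowStoch B) :
    RowStoch (A * B) := by
  obtain ⟨hA0, hA1⟩ := hA
  obtain ⟨hB0, hB1⟩ := hB
  constructor
  · intro i j
    rw [Matrix.mul_apply]
    exact Finset.sum_nonneg fun k _ => mul_nonneg (hA0 _ _) (hB0 _ _)
  · intro i
    simp only [Matrix.mul_apply]
    rw [Finset.sum_comm]
    calc ∑ k, ∑ j, A i k * B k j = ∑ k, A i k * ∑ j, B k j := by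
          simp [Finset.mul_sum]
      _ = 1 := by simp [hB1, hA1]

/-- Key mixing lemma: if `B` agrees with `A` except that row `j` of `B` is a convex
combination of rows `p` and `j` of `A`, and index-updates preserve strict monotonicity,
then total positivity transfers from `A` to `B`. -/
lemma totPos_mix {A B : Matrix (Fin n) (Fin n) ℝ} (hA : TotPos A)
    (p j : Fin n) (hpj : p ≠ j) (l : ℝ) (hl0 : 0 ≤ l) (hl1 : l ≤ 1)
    (hBj : ∀ c, B j c = l * A p c + (1 - l) * A j c)
    (hBo : ∀ r c, r ≠ j → B r c = A r c)
    (hupd : ∀ (k : ℕ) (r : Fin k → Fin n), StrictMono r → (∀ x, r x ≠ p) →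
      ∀ a, r a = j → StrictMono (Function.update r a p)) :
    TotPos B := by
  intro k r c hr hc
  by_cases hj : ∃ a, r a = j
  · obtain ⟨a, ha⟩ := hj
    have hsub : B.submatrix r c = Matrix.updateRow (A.submatrix r c) a
        (l • (fun b => A p (c b)) + (1 - l) • (fun b => A j (c b))) := by
      ext x y
      by_cases hx : x = a
      · subst hx
        simp [Matrix.updateRow_self, ha, hBj]
      · have hrx : r x ≠ j := fun h => hx (hr.injective (h.trans ha.symm))
        simp [Matrix.updateRow_ne hx, hBo _ _ hrx]
    rw [hsub, Matrix.det_updateRow_add, Matrix.det_updateRow_smul, Matrix.det_updateRow_smul]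
    have h2 : Matrix.updateRow (A.submatrix r c) a (fun b => A j (c b)) = A.submatrix r c := by
      ext x y
      by_cases hx : x = a
      · subst hx; simp [ha]
      · simp [Matrix.updateRow_ne hx]
    rw [h2]
    have hd2 : 0 ≤ (A.submatrix r c).det := hA k r c hr hc
    by_cases hp : ∃ a', r a' = p
    · obtain ⟨a', ha'⟩ := hp
      have hne : a' ≠ a := by
        intro h; subst h; exact hpj (ha'.symm.trans ha ▸ rfl)
      have hzero : (Matrix.updateRow (A.submatrix r c) a (fun b => A p (c b))).det = 0 := by
        apply Matrix.det_zero_of_row_eq hne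
        ext y
        rw [Matrix.updateRow_ne hne, Matrix.updateRow_self]
        simp [ha']
      rw [hzero]
      nlinarith
    · push_neg at hp
      have hmono := hupd k r hr hp a ha
      have h1 : Matrix.updateRow (A.submatrix r c) a (fun b => A p (c b)) =
          A.submatrix (Function.update r a p) c := by
        ext x y
        by_cases hx : x = a
        · subst hx; simp [Matrix.updateRow_self, Function.update_self]
        · simp [Matrix.updateRow_ne hx, Function.update_of_ne hx]
      rw [h1]
      have hd1 : 0 ≤ (A.submatrix (Function.update r a p) c).det :=
        hA k _ c hmono hc
      nlinarith
  · have : B.submatrix r c = A.submatrix r c := by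
      ext x y
      exact hBo _ _ fun h => hj ⟨x, h⟩
    rw [this]
    exact hA k r c hr hc

lemma Lel_mul (i : ℕ) (hi : i + 1 < n) (l : ℝ) (A : Matrix (Fin n) (Fin n) ℝ) (r c : Fin n) :
    (Lel n i hi l * A) r c = if r = (⟨i + 1, hi⟩ : Fin n) then
      l * A ⟨i, Nat.lt_of_succ_lt hi⟩ c + (1 - l) * A ⟨i + 1, hi⟩ c
    else A r c := by
  have hij : (⟨i, Nat.lt_of_succ_lt hi⟩ : Fin n) ≠ ⟨i + 1, hi⟩ := by
    simp [Fin.ext_iff]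
  rw [Matrix.mul_apply]
  by_cases hrj : r = (⟨i + 1, hi⟩ : Fin n)
  · subst hrj
    simp only [if_pos rfl]
    have : ∀ k : Fin n, Lel n i hi l ⟨i + 1, hi⟩ k * A k c =
        (if k = ⟨i, Nat.lt_of_succ_lt hi⟩ then l * A k c else 0) +
        (if k = ⟨i + 1, hi⟩ then (1 - l) * A k c else 0) := by
      intro k
      simp only [Lel, Matrix.of_apply]
      by_cases h1 : k = (⟨i, Nat.lt_of_succ_lt hi⟩ : Fin n)
      · subst h1; simp [hij.symm, Ne.symm hij]
      · by_cases h2 : k = (⟨i + 1, hi⟩ : Fin n)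
        · subst h2; simp [hij, Ne.symm hij]
        · simp [h1, h2, Ne.symm h2]
    rw [Finset.sum_congr rfl fun k _ => this k, Finset.sum_add_distrib,
      Finset.sum_ite_eq' Finset.univ, Finset.sum_ite_eq' Finset.univ]
    simp
  · rw [if_neg hrj]
    have : ∀ k : Fin n, Lel n i hi l r k * A k c = if r = k then A k c else 0 := by
      intro k
      simp only [Lel, Matrix.of_apply, hrj]
      simp only [false_and, if_false]
      split <;> simp_all
    rw [Finset.sum_congr rfl fun k _ => this k, Finset.sum_ite_eq Finset.univ]
    simp

lemma Uel_mul (i : ℕ) (hi : i + 1 < n) (l : ℝ) (A : Matrix (Fin n) (Fin n) ℝ) (r c : Fin n) :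
    (Uel n i hi l * A) r c = if r = (⟨i, Nat.lt_of_succ_lt hi⟩ : Fin n) then
      l * A ⟨i + 1, hi⟩ c + (1 - l) * A ⟨i, Nat.lt_of_succ_lt hi⟩ c
    else A r c := by
  have hij : (⟨i, Nat.lt_of_succ_lt hi⟩ : Fin n) ≠ ⟨i + 1, hi⟩ := by
    simp [Fin.ext_iff]
  rw [Matrix.mul_apply]
  by_cases hrj : r = (⟨i, Nat.lt_of_succ_lt hi⟩ : Fin n)
  · subst hrj
    simp only [if_pos rfl]
    have : ∀ k : Fin n, Uel n i hi l ⟨i, Nat.lt_of_succ_lt hi⟩ k * A k c =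
        (if k = ⟨i + 1, hi⟩ then l * A k c else 0) +
        (if k = ⟨i, Nat.lt_of_succ_lt hi⟩ then (1 - l) * A k c else 0) := by
      intro k
      simp only [Uel, Matrix.of_apply]
      by_cases h1 : k = (⟨i + 1, hi⟩ : Fin n)
      · subst h1; simp [hij, Ne.symm hij]
      · by_cases h2 : k = (⟨i, Nat.lt_of_succ_lt hi⟩ : Fin n)
        · subst h2; simp
        · simp [h1, h2, Ne.symm h2]
    rw [Finset.sum_congr rfl fun k _ => this k, Finset.sum_add_distrib,
      Finset.sum_ite_eq' Finset.univ, Finset.sum_ite_eq' Finset.univ]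
    simp [add_comm]
  · rw [if_neg hrj]
    have : ∀ k : Fin n, Uel n i hi l r k * A k c = if r = k then A k c else 0 := by
      intro k
      simp only [Uel, Matrix.of_apply, hrj]
      simp only [false_and, if_false]
      split <;> simp_all
    rw [Finset.sum_congr rfl fun k _ => this k, Finset.sum_ite_eq Finset.univ]
    simp

end Aux

section Aux2

variable {n : ℕ}

lemma totPos_Lel_mul (i : ℕ) (hi : i + 1 < n) (l : ℝ) (hl0 : 0 ≤ l) (hl1 : l ≤ 1)
    {A : Matrix (Fin n) (Fin n) ℝ} (hA : TotPos A) : TotPos (Lel n i hi l * A) := by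
  refine totPos_mix hA ⟨i, Nat.lt_of_succ_lt hi⟩ ⟨i + 1, hi⟩ (by simp [Fin.ext_iff]) l hl0 hl1
    (fun c => by rw [Lel_mul]; simp) (fun r c hr => by rw [Lel_mul]; simp [hr]) ?_
  intro k r hr hnp a ha
  intro x y hxy
  by_cases hx : x = a
  · have hay : a < y := lt_of_eq_of_lt hx.symm hxy
    have hya : y ≠ a := ne_of_gt hay
    have h1 : r a < r y := hr hay
    rw [ha] at h1
    have h2 : (r y).val ≠ i := fun h => hnp y (Fin.ext h)
    rw [hx, Function.update_self, Function.update_of_ne hya]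
    rw [Fin.lt_def] at h1 ⊢
    simp only at h1 ⊢
    omega
  · rw [Function.update_of_ne hx]
    by_cases hy : y = a
    · have hxa : x < a := lt_of_lt_of_eq hxy hy
      have h1 : r x < r a := hr hxa
      rw [ha] at h1
      have h2 : (r x).val ≠ i := fun h => hnp x (Fin.ext h)
      rw [hy, Function.update_self]
      rw [Fin.lt_def] at h1 ⊢
      simp only at h1 ⊢
      omega
    · rw [Function.update_of_ne hy]
      exact hr hxy

lemma totPos_Uel_mul (i : ℕ) (hi : i + 1 < n) (l : ℝ) (hl0 : 0 ≤ l) (hl1 : l ≤ 1)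
    {A : Matrix (Fin n) (Fin n) ℝ} (hA : TotPos A) : TotPos (Uel n i hi l * A) := by
  refine totPos_mix hA ⟨i + 1, hi⟩ ⟨i, Nat.lt_of_succ_lt hi⟩ (by simp [Fin.ext_iff]) l hl0 hl1
    (fun c => by rw [Uel_mul]; simp) (fun r c hr => by rw [Uel_mul]; simp [hr]) ?_
  intro k r hr hnp a ha
  intro x y hxy
  by_cases hx : x = a
  · have hay : a < y := lt_of_eq_of_lt hx.symm hxy
    have hya : y ≠ a := ne_of_gt hay
    have h1 : r a < r y := hr hay
    rw [ha] at h1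
    have h2 : (r y).val ≠ i + 1 := fun h => hnp y (Fin.ext h)
    rw [hx, Function.update_self, Function.update_of_ne hya]
    rw [Fin.lt_def] at h1 ⊢
    simp only at h1 ⊢
    omega
  · rw [Function.update_of_ne hx]
    by_cases hy : y = a
    · have hxa : x < a := lt_of_lt_of_eq hxy hy
      have h1 : r x < r a := hr hxa
      rw [ha] at h1
      rw [hy, Function.update_self]
      rw [Fin.lt_def] at h1 ⊢
      simp only at h1 ⊢
      omega
    · rw [Function.update_of_ne hy]
      exact hr hxy

lemma rowStoch_Lel (i : ℕ) (hi : i + 1 < n) (l : ℝ) (hl0 : 0 ≤ l) (hl1 : l < 1) :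
    RowStoch (Lel n i hi l) := by
  constructor
  · intro r c
    simp only [Lel, Matrix.of_apply]
    split
    · exact hl0
    · split
      · linarith
      · split <;> norm_num
  · intro r
    have := Lel_mul (n := n) i hi l (Matrix.of fun _ _ => (1 : ℝ)) r ⟨i, Nat.lt_of_succ_lt hi⟩
    rw [Matrix.mul_apply] at this
    simp only [Matrix.of_apply, mul_one] at this
    rw [this]
    split <;> ring

lemma rowStoch_Uel (i : ℕ) (hi : i + 1 < n) (l : ℝ) (hl0 : 0 ≤ l) (hl1 : l < 1) :
    RowStoch (Uel n i hi l) := by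
  constructor
  · intro r c
    simp only [Uel, Matrix.of_apply]
    split
    · linarith
    · split
      · exact hl0
      · split <;> norm_num
  · intro r
    have := Uel_mul (n := n) i hi l (Matrix.of fun _ _ => (1 : ℝ)) r ⟨i, Nat.lt_of_succ_lt hi⟩
    rw [Matrix.mul_apply] at this
    simp only [Matrix.of_apply, mul_one] at this
    rw [this]
    split <;> ring

lemma det_Lel (i : ℕ) (hi : i + 1 < n) (l : ℝ) : (Lel n i hi l).det = 1 - l := by
  have htri : (Lel n i hi l).BlockTriangular OrderDual.toDual := by
    intro r c h
    have h' : r < c := h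
    simp only [Lel, Matrix.of_apply]
    have h1 : ¬(r = (⟨i + 1, hi⟩ : Fin n) ∧ c = (⟨i, Nat.lt_of_succ_lt hi⟩ : Fin n)) := by
      rintro ⟨rfl, rfl⟩
      exact absurd h' (by simp [Fin.lt_def])
    rw [if_neg h1]
    split
    · rename_i h2
      exact absurd h'.ne (by rw [h2.1, h2.2]; simp)
    · rw [if_neg h'.ne]
  rw [Matrix.det_of_lowerTriangular _ htri]
  have hdiag : ∀ d : Fin n, Lel n i hi l d d = if d = (⟨i + 1, hi⟩ : Fin n) then 1 - l else 1 := by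
    intro d
    simp only [Lel, Matrix.of_apply]
    by_cases hd : d = (⟨i + 1, hi⟩ : Fin n)
    · subst hd; simp [Fin.ext_iff]
    · simp [hd]
  rw [Finset.prod_congr rfl fun d _ => hdiag d]
  simp [Finset.prod_ite_eq']

lemma det_Uel (i : ℕ) (hi : i + 1 < n) (l : ℝ) : (Uel n i hi l).det = 1 - l := by
  have htri : (Uel n i hi l).BlockTriangular id := by
    intro r c h
    have h' : c < r := h
    simp only [Uel, Matrix.of_apply]
    have h1 : ¬(r = (⟨i, Nat.lt_of_succ_lt hi⟩ : Fin n) ∧ c = (⟨i, Nat.lt_of_succ_lt hi⟩ : Fin n)) := by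
      rintro ⟨rfl, rfl⟩
      exact absurd h' (lt_irrefl _)
    have h2 : ¬(r = (⟨i, Nat.lt_of_succ_lt hi⟩ : Fin n) ∧ c = (⟨i + 1, hi⟩ : Fin n)) := by
      rintro ⟨rfl, rfl⟩
      exact absurd h' (by simp [Fin.lt_def])
    rw [if_neg h1, if_neg h2, if_neg h'.ne']
  rw [Matrix.det_of_upperTriangular htri]
  have hdiag : ∀ d : Fin n, Uel n i hi l d d =
      if d = (⟨i, Nat.lt_of_succ_lt hi⟩ : Fin n) then 1 - l else 1 := by
    intro d
    by_cases hd : d = (⟨i, Nat.lt_of_succ_lt hi⟩ : Fin n)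
    · subst hd; simp [Uel]
    · simp [Uel, hd]
  rw [Finset.prod_congr rfl fun d _ => hdiag d]
  simp [Finset.prod_ite_eq']

end Aux2

theorem stmt17 (n : ℕ) (L : List (Matrix (Fin n) (Fin n) ℝ))
    (hL : ∀ E ∈ L, ∃ (i : ℕ) (hi : i + 1 < n) (l : ℝ), 0 ≤ l ∧ l < 1 ∧
      (E = Uel n i hi l ∨ E = Lel n i hi l)) :
    IsUnit L.prod.det ∧ RowStoch L.prod ∧ TotPos L.prod := by
  induction L with
  | nil =>
      simp only [List.prod_nil]
      exact ⟨by simp, rowStoch_one, totPos_one⟩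
  | cons E L ih =>
      obtain ⟨hu, hs, ht⟩ := ih fun E' hE' => hL E' (List.mem_cons_of_mem _ hE')
      obtain ⟨i, hi, l, hl0, hl1, hE⟩ := hL E List.mem_cons_self
      rw [List.prod_cons]
      have hdetE : E.det = 1 - l := by
        rcases hE with rfl | rfl
        · exact det_Uel i hi l
        · exact det_Lel i hi l
      have hsE : RowStoch E := by
        rcases hE with rfl | rfl
        · exact rowStoch_Uel i hi l hl0 hl1
        · exact rowStoch_Lel i hi l hl0 hl1
      refine ⟨?_, rowStoch_mul hsE hs, ?_⟩
      · rw [Matrix.det_mul]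
        exact (isUnit_iff_ne_zero.mpr (by rw [hdetE]; linarith)).mul hu
      · rcases hE with rfl | rfl
        · exact totPos_Uel_mul i hi l hl0 hl1.le ht
        · exact totPos_Lel_mul i hi l hl0 hl1.le ht
end
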